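/- Let X, Y ∈ ℝ^{r×n}. Then min over Q ∈ SO(r) of ‖QX − Y‖_F² equals ‖X‖_F² + ‖Y‖_F² − 2‖XY^T‖_* + 4σ_min(XY^T)·[det(XY^T) < 0], where [·] is 1 if the condition holds and 0 otherwise. -/

import Mathlib

/-!
Expanding the square, `‖QX - Y‖² = ‖X‖² + ‖Y‖² - 2 tr(Q X Yᵀ)`, and with `X Yᵀ = U Σ V` the trace
is `tr(P Σ) = ∑ Pᵢᵢ σᵢ` for the orthogonal matrix `P = V Q U`, which ranges over the orthogonal
matrices of determinant `det V · det U` as `Q` ranges over `SO(r)`. Since `Pᵢᵢ ≤ 1`, the sum is at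
most `∑ σᵢ`. If `det P = -1`, then `P` has eigenvalue `-1`, and Cauchy–Schwarz applied to
`(P - 1) v = -2 v` gives `4 ≤ ‖P - 1‖_F² = 2r - 2 tr P`; writing
`∑ Pᵢᵢ σᵢ = ∑ Pᵢᵢ (σᵢ - σ_min) + σ_min tr P` then bounds the sum by `∑ σᵢ - 2 σ_min`.
Both bounds are attained by `P = diag(1, …, 1, ±1)`.
-/

open Matrix Finset

namespace Matrix

variable {m n : Type*} [Fintype m] [Fintype n]

theorem sum_sq_eq_trace_mul_transpose (A : Matrix m n ℝ) :
    ∑ i, ∑ j, A i j ^ 2 = trace (A * Aᵀ) := by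
  simp [trace, mul_apply, sq]

theorem sum_sq_mulVec_le (A : Matrix m n ℝ) (v : n → ℝ) :
    ∑ i, (A *ᵥ v) i ^ 2 ≤ (∑ i, ∑ j, A i j ^ 2) * ∑ j, v j ^ 2 := by
  rw [sum_mul]
  exact sum_le_sum fun i _ => sum_mul_sq_le_sq_mul_sq _ _ _

theorem trace_mul_mul_diagonal_mul [DecidableEq m] {R : Type*} [CommSemiring R]
    (Q U V : Matrix m m R) (σ : m → R) :
    trace (Q * (U * diagonal σ * V)) = ∑ i, (V * Q * U) i i * σ i := by
  rw [← Matrix.mul_assoc, trace_mul_comm, ← Matrix.mul_assoc, ← Matrix.mul_assoc]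
  simp [trace, mul_diagonal]

variable [DecidableEq m] {P : Matrix m m ℝ}

theorem sum_sq_mul_sub_of_mem_orthogonalGroup {Q : Matrix m m ℝ} (hQ : Q ∈ orthogonalGroup m ℝ)
    (X Y : Matrix m n ℝ) :
    ∑ i, ∑ j, (Q * X - Y) i j ^ 2
      = ∑ i, ∑ j, X i j ^ 2 + ∑ i, ∑ j, Y i j ^ 2 - 2 * trace (Q * (X * Yᵀ)) := by
  have hQ' : Qᵀ * Q = 1 := (mem_orthogonalGroup_iff' m ℝ).mp hQ
  have hcross : trace (Y * (Q * X)ᵀ) = trace (Q * (X * Yᵀ)) := by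
    rw [← trace_transpose]; simp [transpose_mul, Matrix.mul_assoc]
  have hQX : trace (Q * X * (Q * X)ᵀ) = trace (X * Xᵀ) := by
    rw [transpose_mul, trace_mul_comm, Matrix.mul_assoc, ← Matrix.mul_assoc Qᵀ, hQ', Matrix.one_mul,
      trace_mul_comm]
  simp only [sum_sq_eq_trace_mul_transpose, transpose_sub, Matrix.sub_mul, Matrix.mul_sub,
    trace_sub, hQX, hcross, ← Matrix.mul_assoc]
  ring

theorem diag_le_one_of_mem_orthogonalGroup (hP : P ∈ orthogonalGroup m ℝ) (i : m) : P i i ≤ 1 :=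
  (le_abs_self _).trans (entry_norm_bound_of_unitary hP i i)

theorem det_eq_one_or_neg_one_of_mem_orthogonalGroup (hP : P ∈ orthogonalGroup m ℝ) :
    P.det = 1 ∨ P.det = -1 :=
  mul_self_eq_one_iff.mp (det_of_mem_unitary hP).1

theorem exists_mulVec_eq_neg_of_det_eq_neg_one (hP : P ∈ orthogonalGroup m ℝ) (hdet : P.det = -1) :
    ∃ v ≠ 0, P *ᵥ v = -v := by
  have hPP : P * Pᵀ = 1 := (mem_orthogonalGroup_iff m ℝ).mp hP
  have hsing : (P + 1).det = 0 := by
    have h : P + 1 = P * (P + 1)ᵀ := by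
      rw [transpose_add, Matrix.mul_add, hPP, transpose_one, Matrix.mul_one, add_comm]
    have := congrArg det h
    rw [det_mul, det_transpose, hdet] at this
    linarith
  obtain ⟨v, hv, hPv⟩ := exists_mulVec_eq_zero_iff.mpr hsing
  refine ⟨v, hv, ?_⟩
  rw [add_mulVec, one_mulVec] at hPv
  exact eq_neg_of_add_eq_zero_left hPv

theorem sum_sq_sub_one_of_mem_orthogonalGroup (hP : P ∈ orthogonalGroup m ℝ) :
    ∑ i, ∑ j, (P - 1) i j ^ 2 = 2 * Fintype.card m - 2 * trace P := by
  have hPP : P * Pᵀ = 1 := (mem_orthogonalGroup_iff m ℝ).mp hP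
  rw [sum_sq_eq_trace_mul_transpose, transpose_sub, transpose_one, Matrix.sub_mul, Matrix.mul_sub,
    Matrix.mul_sub, hPP]
  simp only [Matrix.mul_one, Matrix.one_mul, trace_sub, trace_transpose, trace_one]
  ring

theorem trace_le_card_sub_two_of_det_eq_neg_one (hP : P ∈ orthogonalGroup m ℝ) (hdet : P.det = -1) :
    trace P ≤ Fintype.card m - 2 := by
  obtain ⟨v, hv, hPv⟩ := exists_mulVec_eq_neg_of_det_eq_neg_one hP hdet
  have hv2 : 0 < ∑ j, v j ^ 2 := by
    obtain ⟨j, hj⟩ := Function.ne_iff.mp hv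
    exact (sq_pos_of_ne_zero hj).trans_le
      (single_le_sum (fun k _ => sq_nonneg (v k)) (mem_univ j))
  have hCS := sum_sq_mulVec_le (P - 1) v
  rw [sum_sq_sub_one_of_mem_orthogonalGroup hP, sub_mulVec, one_mulVec, hPv] at hCS
  have hsq : ∑ i, (-v - v) i ^ 2 = 4 * ∑ j, v j ^ 2 := by
    rw [mul_sum]; exact sum_congr rfl fun i _ => by rw [Pi.sub_apply, Pi.neg_apply]; ring
  nlinarith

theorem sum_diag_mul_le_of_mem_orthogonalGroup (hP : P ∈ orthogonalGroup m ℝ) {σ : m → ℝ} {k : m}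
    (hk : ∀ i, σ k ≤ σ i) (hσk : 0 ≤ σ k) :
    ∑ i, P i i * σ i ≤ ∑ i, σ i - (1 - P.det) * σ k := by
  have hdiag := diag_le_one_of_mem_orthogonalGroup hP
  rcases det_eq_one_or_neg_one_of_mem_orthogonalGroup hP with hdet | hdet
  · rw [hdet, sub_self, zero_mul, sub_zero]
    exact sum_le_sum fun i _ => mul_le_of_le_one_left (hσk.trans (hk i)) (hdiag i)
  · have htr := trace_le_card_sub_two_of_det_eq_neg_one hP hdet
    have hsplit : ∑ i, P i i * σ i = ∑ i, P i i * (σ i - σ k) + trace P * σ k := by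
      rw [trace, sum_mul, ← sum_add_distrib]
      exact sum_congr rfl fun i _ => by rw [diag_apply]; ring
    have hexcess : ∑ i, P i i * (σ i - σ k) ≤ ∑ i, σ i - Fintype.card m * σ k := by
      rw [← card_univ, ← nsmul_eq_mul, ← sum_const, ← sum_sub_distrib]
      exact sum_le_sum fun i _ => mul_le_of_le_one_left (sub_nonneg.mpr (hk i)) (hdiag i)
    rw [hsplit, hdet]
    nlinarith

theorem exists_mem_orthogonalGroup_sum_diag_mul_eq {ε : ℝ} (hε : ε = 1 ∨ ε = -1) (σ : m → ℝ)
    (k : m) :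
    ∃ P ∈ orthogonalGroup m ℝ, P.det = ε ∧ ∑ i, P i i * σ i = ∑ i, σ i - (1 - ε) * σ k := by
  refine ⟨diagonal (Function.update 1 k ε), ?_, ?_, ?_⟩
  · rw [mem_orthogonalGroup_iff, diagonal_transpose, diagonal_mul_diagonal, ← diagonal_one]
    congr 1
    ext i
    rcases eq_or_ne i k with rfl | hi
    · rcases hε with rfl | rfl <;> simp
    · simp [hi]
  · rw [det_diagonal, prod_update_of_mem (mem_univ k)]
    simp
  · have h (i : m) :
        Function.update (1 : m → ℝ) k ε i * σ i = σ i - if i = k then (1 - ε) * σ k else 0 := by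
      rcases eq_or_ne i k with rfl | hi
      · rw [Function.update_self, if_pos rfl]; ring
      · rw [Function.update_of_ne hi, if_neg hi, Pi.one_apply]; ring
    simp only [diagonal_apply_eq, h, sum_sub_distrib, sum_ite_eq', mem_univ, if_true]

theorem exists_mem_orthogonalGroup_mul_mul_eq {U V : Matrix m m ℝ} (hV : V ∈ orthogonalGroup m ℝ)
    (hU : U ∈ orthogonalGroup m ℝ) (hP : P ∈ orthogonalGroup m ℝ) (hdet : P.det = (V * U).det) :
    ∃ Q ∈ orthogonalGroup m ℝ, Q.det = 1 ∧ V * Q * U = P := by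
  set Q := star V * P * star U
  have hVQU : V * Q * U = P := by
    simp only [Q, ← Matrix.mul_assoc, Unitary.mul_star_self_of_mem hV, Matrix.one_mul]
    rw [Matrix.mul_assoc, Unitary.star_mul_self_of_mem hU, Matrix.mul_one]
  refine ⟨Q, mul_mem (mul_mem (Unitary.star_mem hV) hP) (Unitary.star_mem hU), ?_, hVQU⟩
  have h : V.det * Q.det * U.det = V.det * U.det := by
    rw [← det_mul, ← det_mul, hVQU, hdet, det_mul]
  have hVU : V.det * U.det ≠ 0 := by
    rw [← det_mul]
    rcases det_eq_one_or_neg_one_of_mem_orthogonalGroup (mul_mem hV hU) with h | h <;> simp [h]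
  exact mul_left_cancel₀ hVU (by linear_combination h)

end Matrix

theorem ite_mul_prod_neg_eq {m : Type*} [Fintype m] {ε : ℝ} (hε : ε = 1 ∨ ε = -1) {σ : m → ℝ}
    (hσ : ∀ i, 0 ≤ σ i) {k : m} (hk : ∀ i, σ k ≤ σ i) :
    (if ε * ∏ i, σ i < 0 then 4 * σ k else 0) = 2 * ((1 - ε) * σ k) := by
  have hprod : 0 ≤ ∏ i, σ i := prod_nonneg fun i _ => hσ i
  rcases hε with rfl | rfl
  · rw [if_neg (by linarith)]; ring
  · split_ifs with hneg
    · ring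
    · obtain ⟨i, -, hi⟩ := prod_eq_zero_iff.mp (le_antisymm (by linarith) hprod)
      rw [le_antisymm (hi ▸ hk i) (hσ k)]; ring

/-- For `X, Y ∈ ℝ^{r×n}`, writing `X Yᵀ = U · diag σ · V` for its singular value
decomposition (`U, V` orthogonal, `σ` antitone nonnegative), the minimum of
`‖QX − Y‖_F²` over `Q ∈ SO(r)` equals
`‖X‖_F² + ‖Y‖_F² − 2 ∑ σᵢ + 4 σ_min · [det(XYᵀ) < 0]`, and it is attained. -/
theorem stmt14 {r n : ℕ} (hr : 0 < r) (X Y : Matrix (Fin r) (Fin n) ℝ)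
    (σ : Fin r → ℝ) (hσ0 : ∀ i, 0 ≤ σ i) (hσmono : Antitone σ)
    (U V : Matrix (Fin r) (Fin r) ℝ)
    (hU : U ∈ Matrix.orthogonalGroup (Fin r) ℝ)
    (hV : V ∈ Matrix.orthogonalGroup (Fin r) ℝ)
    (hXY : X * Y.transpose = U * Matrix.diagonal σ * V) :
    IsLeast
      {c : ℝ | ∃ Q ∈ Matrix.orthogonalGroup (Fin r) ℝ, Q.det = 1 ∧
        (∑ i, ∑ j, ((Q * X - Y) i j) ^ 2) = c}
      ((∑ i, ∑ j, (X i j) ^ 2) + (∑ i, ∑ j, (Y i j) ^ 2) - 2 * ∑ i, σ i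
        + (if (X * Y.transpose).det < 0 then 4 * σ ⟨r - 1, by omega⟩ else 0)) := by
  set k : Fin r := ⟨r - 1, by omega⟩
  have hk : ∀ i, σ k ≤ σ i := fun i => hσmono (Fin.le_def.mpr (by simp [k]; omega))
  have hε := det_eq_one_or_neg_one_of_mem_orthogonalGroup (mul_mem hV hU)
  have hdet : (X * Y.transpose).det = (V * U).det * ∏ i, σ i := by
    rw [hXY, det_mul, det_mul, det_mul, det_diagonal]; ring
  rw [hdet, ite_mul_prod_neg_eq hε hσ0 hk]
  constructor
  · obtain ⟨P, hP, hPdet, hPsum⟩ := exists_mem_orthogonalGroup_sum_diag_mul_eq hε σ k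
    obtain ⟨Q, hQ, hQdet, hVQU⟩ := exists_mem_orthogonalGroup_mul_mul_eq hV hU hP hPdet
    refine ⟨Q, hQ, hQdet, ?_⟩
    rw [sum_sq_mul_sub_of_mem_orthogonalGroup hQ, hXY, trace_mul_mul_diagonal_mul, hVQU, hPsum]
    ring
  · rintro _ ⟨Q, hQ, hQdet, rfl⟩
    have hbound := sum_diag_mul_le_of_mem_orthogonalGroup (mul_mem (mul_mem hV hQ) hU) hk (hσ0 k)
    rw [det_mul, det_mul, hQdet, mul_one, ← det_mul] at hbound
    rw [sum_sq_mul_sub_of_mem_orthogonalGroup hQ, hXY, trace_mul_mul_diagonal_mul]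
    linarith
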